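/- There is no finite connected pentavalent graph Γ admitting an arc-transitive group G ≤ Aut Γ that contains a cyclic normal subgroup F acting regularly on the vertices of Γ. -/

import Mathlib

/-!
Fix a vertex `v`. Since `F` is regular, `f ↦ f • v` identifies the connection set
`S = {f ∈ F | v ~ f • v}` with the five neighbours of `v`, and `S` is closed under inversion.
As `|S|` is odd, inversion fixes some `s ∈ S`, so `s² = 1`. Arc-transitivity gives `g ∈ G_v`
with `g • (t • v) = s • v` for any `t ∈ S`; as `F` is normal and regular, `g t g⁻¹ = s`.
Hence all five elements of `S` square to `1`, but a cyclic group has at most two such elements.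
-/

/-- The automorphism group of a simple graph acts on its vertices. -/
instance graphAutMulAction {V : Type*} {Γ : SimpleGraph V} : MulAction (Γ ≃g Γ) V where
  smul g v := g v
  one_smul _ := rfl
  mul_smul _ _ _ := rfl

theorem Set.exists_mem_inv_eq_self_of_odd_ncard {α : Type*} [InvolutiveInv α] {S : Set α}
    (hS : ∀ a ∈ S, a⁻¹ ∈ S) (hodd : Odd S.ncard) : ∃ a ∈ S, a⁻¹ = a := by
  have : Fintype S := (Set.finite_of_ncard_pos hodd.pos).fintype
  let σ : Equiv.Perm S :=
    Function.Involutive.toPerm (fun a => ⟨a.1⁻¹, hS _ a.2⟩) fun a => Subtype.ext (inv_inv a.1)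
  have hσ : σ ^ 2 ^ 1 = 1 := Equiv.ext fun a => Subtype.ext (inv_inv a.1)
  have hcard : ¬2 ∣ Fintype.card S := by
    rw [← Set.toFinset_card, ← Set.ncard_eq_toFinset_card', ← even_iff_two_dvd]
    exact Nat.not_even_iff_odd.mpr hodd
  obtain ⟨⟨a, ha⟩, hfix⟩ := Equiv.Perm.exists_fixed_point_of_prime (p := 2) hcard hσ
  exact ⟨a, ha, congrArg Subtype.val hfix⟩

theorem IsCyclic.ncard_le_of_forall_pow_eq_one {α : Type*} [Group α] [Finite α] [IsCyclic α]
    {S : Set α} {n : ℕ} (hn : 0 < n) (hS : ∀ a ∈ S, a ^ n = 1) : S.ncard ≤ n := by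
  classical
  have := Fintype.ofFinite α
  calc S.ncard ≤ (({a | a ^ n = 1} : Finset α) : Set α).ncard :=
        Set.ncard_le_ncard fun a ha => by simpa using hS a ha
    _ ≤ n := by rw [Set.ncard_coe_finset]; exact IsCyclic.card_pow_eq_one_le hn

section RegularAction

variable {G V : Type*} [Group G] [MulAction G V] {v : V}

theorem MulAction.smul_left_bijective (htrans : ∀ u : V, ∃ g : G, g • v = u)
    (hfree : ∀ g : G, g • v = v → g = 1) : Function.Bijective fun g : G => g • v := by
  refine ⟨fun a b hab => ?_, htrans⟩
  have := hfree (b⁻¹ * a) (by rw [mul_smul, inv_smul_eq_iff]; exact hab)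
  exact (inv_mul_eq_one.mp this).symm

theorem Subgroup.conj_eq_of_smul_eq {N : Subgroup G} [N.Normal]
    (hfree : ∀ n : N, n • v = v → n = 1) {g n m : G} (hg : g • v = v) (hn : n ∈ N) (hm : m ∈ N)
    (h : g • n • v = m • v) : g * n * g⁻¹ = m := by
  have hmem : m⁻¹ * (g * n * g⁻¹) ∈ N := N.mul_mem (N.inv_mem hm) (‹N.Normal›.conj_mem n hn g)
  have hfix : (m⁻¹ * (g * n * g⁻¹)) • v = v := by
    rw [mul_smul, mul_smul, mul_smul, inv_smul_eq_iff.mpr hg.symm, h, inv_smul_smul]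
  exact (inv_mul_eq_one.mp (congrArg Subtype.val (hfree ⟨_, hmem⟩ hfix))).symm

end RegularAction

namespace SimpleGraph

variable {F V : Type*} [Group F] [MulAction F V] {Γ : SimpleGraph V} {v : V}

/-- The connection set of `Γ` at `v`: when `F` is regular, `Γ` is the Cayley graph `Cay(F, S)`. -/
def connectionSet (Γ : SimpleGraph V) (v : V) : Set F := {f | Γ.Adj v (f • v)}

theorem inv_mem_connectionSet (hΓ : ∀ (f : F) (u w : V), Γ.Adj (f • u) (f • w) ↔ Γ.Adj u w)
    {f : F} (hf : f ∈ Γ.connectionSet v) : f⁻¹ ∈ Γ.connectionSet v := by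
  have := (hΓ f⁻¹ v (f • v)).mpr hf
  rw [inv_smul_smul] at this
  exact this.symm

theorem ncard_connectionSet [Fintype V] [DecidableRel Γ.Adj]
    (hreg : Function.Bijective fun f : F => f • v) :
    (Γ.connectionSet v : Set F).ncard = Γ.degree v := by
  have himage : (fun f : F => f • v) '' Γ.connectionSet v = Γ.neighborSet v := by
    ext u
    obtain ⟨f, rfl⟩ := hreg.2 u
    simp [connectionSet, hreg.1.eq_iff]
  rw [← Set.ncard_image_of_injective _ hreg.1, himage, ← card_neighborSet_eq_degree,
    Set.ncard_eq_toFinset_card', Set.toFinset_card]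

theorem isConj_of_mem_connectionSet {G : Type*} [Group G] [MulAction G V]
    (hloc : ∀ ⦃u w : V⦄, Γ.Adj v u → Γ.Adj v w → ∃ g : G, g • v = v ∧ g • u = w)
    {N : Subgroup G} [N.Normal] (hfree : ∀ n : N, n • v = v → n = 1) {s t : N}
    (hs : s ∈ Γ.connectionSet v) (ht : t ∈ Γ.connectionSet v) : IsConj (t : G) s :=
  let ⟨g, hgv, hgt⟩ := hloc ht hs
  isConj_iff.mpr ⟨g, Subgroup.conj_eq_of_smul_eq hfree hgv t.2 s.2 hgt⟩

end SimpleGraph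

theorem no_cyclic_regular_normal_subgroup
    {V : Type*} [Fintype V] (Γ : SimpleGraph V) [DecidableRel Γ.Adj]
    (hconn : Γ.Connected) (hdeg : ∀ v : V, Γ.degree v = 5)
    (G : Subgroup (Γ ≃g Γ))
    (harc : ∀ ⦃u v u' v' : V⦄, Γ.Adj u v → Γ.Adj u' v' →
      ∃ g ∈ G, g • u = u' ∧ g • v = v')
    (F : Subgroup G) (hnorm : F.Normal) (hcyc : IsCyclic F)
    (htrans : ∀ u v : V, ∃ f : F, f • u = v)
    (hfree : ∀ (f : F) (v : V), f • v = v → f = 1) :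
    False := by
  obtain ⟨v⟩ := hconn.nonempty
  have hreg := MulAction.smul_left_bijective (htrans v) (hfree · v)
  have : Finite F := Finite.of_injective _ hreg.1
  have hcard : (Γ.connectionSet v : Set F).ncard = 5 :=
    (SimpleGraph.ncard_connectionSet hreg).trans (hdeg v)
  obtain ⟨s, hs, hss⟩ :=
    Set.exists_mem_inv_eq_self_of_odd_ncard (S := (Γ.connectionSet v : Set F))
    (fun _ => SimpleGraph.inv_mem_connectionSet fun f _ _ => ((f : G) : Γ ≃g Γ).map_adj_iff)
    (by rw [hcard]; decide)
  have hs2 : (s : G) ^ 2 = 1 := by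
    rw [pow_two, mul_eq_one_iff_eq_inv, ← Subgroup.coe_inv, hss]
  have hloc : ∀ ⦃u w : V⦄, Γ.Adj v u → Γ.Adj v w → ∃ g : G, g • v = v ∧ g • u = w :=
    fun _ _ hu hw => let ⟨g, hg, hgv, hgu⟩ := harc hu hw; ⟨⟨g, hg⟩, hgv, hgu⟩
  have hsq : ∀ t ∈ (Γ.connectionSet v : Set F), t ^ 2 = 1 := fun t ht => by
    have h := (SimpleGraph.isConj_of_mem_connectionSet hloc (hfree · v) hs ht).pow 2
    rw [hs2, isConj_one_left] at h
    exact_mod_cast h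
  have := IsCyclic.ncard_le_of_forall_pow_eq_one two_pos hsq
  omega
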